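/- arXiv:2507.13945 — 3 statements merged into one kernel-verified Lean document; each statement's English description precedes it below -/
import Mathlib

section
/- Let α be a type, w : ℕ → α, and i ℓ k : ℕ with 1 ≤ k and k ≤ ℓ, and suppose that for all t < ℓ, w (i + t) = w (i + k + t). Then the length-k factor of w starting at position i + ℓ is a cyclic rotation of the length-k factor starting at position i: List.ofFn (fun t : Fin k => w (i + ℓ + (t : ℕ))) = (List.ofFn (fun t : Fin k => w (i + (t : ℕ)))).rotate (ℓ % k). -/
/-!
The overlap says that `w` has period `k` on the window `[i, i + ℓ + k)`, so every letter in that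
window equals the letter at the same position modulo `k` in the first period `[i, i + k)`. Reading
the factor at `i + ℓ` therefore reads the first period cyclically, starting from offset `ℓ % k`.
-/

theorem List.ofFn_add_mod_eq_rotate {α : Type*} (f : ℕ → α) (k m : ℕ) :
    List.ofFn (fun t : Fin k => f ((m + t) % k)) = (List.ofFn fun t : Fin k => f t).rotate m := by
  apply List.ext_getElem (by simp)
  intro n hn _
  simp only [List.getElem_ofFn, List.getElem_rotate, List.length_ofFn, Nat.add_comm m n]

theorem apply_eq_apply_mod_of_forall_lt_eq_apply_add {α : Type*} {w : ℕ → α} {n k : ℕ}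
    (h : ∀ t < n, w t = w (k + t)) : ∀ s < n + k, w s = w (s % k) := by
  rcases Nat.eq_zero_or_pos k with rfl | hk
  · simp
  intro s
  induction s using Nat.strong_induction_on with
  | _ s ih =>
    intro hs
    rcases Nat.lt_or_ge s k with hsk | hks
    · rw [Nat.mod_eq_of_lt hsk]
    · obtain ⟨t, rfl⟩ := Nat.exists_eq_add_of_le hks
      rw [← h t (by omega), ih t (by omega) (by omega), Nat.add_mod_left]

theorem overlap_implies_cyclic_rotation_general {α : Type*} (w : ℕ → α) (i ℓ k : ℕ)
    (h : ∀ t < ℓ, w (i + t) = w (i + k + t)) :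
    List.ofFn (fun t : Fin k => w (i + ℓ + (t : ℕ))) =
      (List.ofFn (fun t : Fin k => w (i + (t : ℕ)))).rotate (ℓ % k) := by
  have periodic : ∀ s < ℓ + k, w (i + s) = w (i + s % k) :=
    apply_eq_apply_mod_of_forall_lt_eq_apply_add (w := fun s => w (i + s))
      (by simpa only [add_assoc] using h)
  calc List.ofFn (fun t : Fin k => w (i + ℓ + (t : ℕ)))
      = List.ofFn (fun t : Fin k => w (i + (ℓ + t) % k)) := by
        congr 1
        funext t
        rw [add_assoc, periodic _ (by omega)]
    _ = (List.ofFn (fun t : Fin k => w (i + (t : ℕ)))).rotate ℓ :=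
        List.ofFn_add_mod_eq_rotate (fun s => w (i + s)) k ℓ
    _ = (List.ofFn (fun t : Fin k => w (i + (t : ℕ)))).rotate (ℓ % k) := by
        rw [← List.rotate_mod, List.length_ofFn]

theorem overlap_implies_cyclic_rotation {α : Type*} (w : ℕ → α) (i ℓ k : ℕ)
    (hk : 1 ≤ k) (hkl : k ≤ ℓ)
    (h : ∀ t < ℓ, w (i + t) = w (i + k + t)) :
    List.ofFn (fun t : Fin k => w (i + ℓ + (t : ℕ))) =
      (List.ofFn (fun t : Fin k => w (i + (t : ℕ)))).rotate (ℓ % k) :=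
  overlap_implies_cyclic_rotation_general w i ℓ k h
end

section
/- Let α be a type and model letters as elements of α × Bool with the inverse of a letter (a, b) given by (a, !b). Let l : List (α × Bool) be reduced, i.e., List.Chain' (fun x y => ¬(x.1 = y.1 ∧ y.2 = !x.2)) l. Let ℓ ≥ 1 and i, i' : ℕ satisfy i < i', i' ≤ i + ℓ, and i' + ℓ ≤ l.length. Then it is impossible that the length-ℓ factor of l starting at i' equals the inverse of the length-ℓ factor starting at i, i.e., it cannot hold that for all t < ℓ, the (i' + t)-th letter of l equals the inverse of the (i + ℓ - 1 - t)-th letter of l. -/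
/-- Reduced words over `α × Bool`, where `(a, !b)` is the inverse of the letter `(a, b)`. -/
abbrev IsReducedWord {α : Type*} (l : List (α × Bool)) : Prop :=
  List.IsChain (fun x y => ¬(x.1 = y.1 ∧ y.2 = !x.2)) l

theorem IsReducedWord.getElem_ne_inv {α : Type*} {l : List (α × Bool)} (hred : IsReducedWord l)
    {q r : ℕ} (hrq : r ≤ q) (hqr : q ≤ r + 1) (hq : q < l.length) :
    l[q] ≠ (l[r].1, !l[r].2) := by
  intro h
  obtain rfl | rfl : q = r ∨ q = r + 1 := by omega
  · exact Bool.not_ne_self l[q].2 (congrArg Prod.snd h).symm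
  · exact List.isChain_iff_getElem.mp hred r hq
      ⟨(congrArg Prod.fst h).symm, congrArg Prod.snd h⟩

theorem intersecting_auto_reaching_same_direction {α : Type*} (l : List (α × Bool))
    (hred : List.Chain' (fun x y => ¬(x.1 = y.1 ∧ y.2 = !x.2)) l)
    (ℓ i i' : ℕ) (h1 : i < i') (h2 : i' ≤ i + ℓ) (h3 : i' + ℓ ≤ l.length) :
    ¬ (∀ t, (ht : t < ℓ) →
        l[i' + t]'(by omega) =
          ((l[i + ℓ - 1 - t]'(by omega)).1, !(l[i + ℓ - 1 - t]'(by omega)).2)) := by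
  intro H
  -- The reflection `i' + t ↦ i + ℓ - 1 - t` is centred inside the overlap, so at the middle
  -- `t` it sends a position to itself or to its left neighbour.
  have hmid := H ((i + ℓ - i') / 2) (by omega)
  exact IsReducedWord.getElem_ne_inv hred (by omega) (by omega) (by omega) hmid
end

section
/- Let α be a type, m ≥ 1 a natural number, and w : ℤ → α × Bool an m-periodic doubly infinite word, i.e., w (t + m) = w t for all t : ℤ. Let ℓ : ℕ and p, p' : ℤ be such that: (i) (w (p - 1)).2 = true and (w (p + ℓ)).2 = false (the occurrence at p is on top); (ii) (w (p' - 1)).2 = false and (w (p' + ℓ)).2 = true (the occurrence at p' is at the bottom); and (iii) the two occurrences of length ℓ agree as strings, meaning either (same orientation) for all t < ℓ, w (p + t) = w (p' + t), or (opposite orientation) for all t < ℓ, w (p' + t) = ((w (p + ℓ - 1 - t)).1, !(w (p + ℓ - 1 - t)).2). Then ℓ + 2 ≤ m. -/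
/-!
Suppose `m ≤ ℓ + 1`. If `m = ℓ + 1`, the two arrows framing the occurrence on top are one period
apart, hence equal, yet one is direct and the other inverse. If `m ≤ ℓ`, the letter just left of
an occurrence reappears one period later inside it, at relative position `m - 1`. So the
identification of the two occurrences extends to their left neighbours (same orientation), or
identifies the left neighbour of the bottom occurrence with the inverse of the right neighbour of
the top one (opposite orientation); either way the orientations of the framing arrows clash.
-/

namespace Function.Periodic

variable {β : Type*} {w : ℤ → β} {m ℓ : ℕ} {p p' : ℤ}

theorem apply_sub_one_eq_of_shift_agree (hw : Periodic w m) (hm : 1 ≤ m) (hmℓ : m ≤ ℓ)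
    (h : ∀ t : ℕ, t < ℓ → w (p + t) = w (p' + t)) : w (p - 1) = w (p' - 1) := by
  have hwin := h (m - 1) (by omega)
  rwa [show p + (m - 1 : ℕ) = p - 1 + m by omega, show p' + (m - 1 : ℕ) = p' - 1 + m by omega,
    hw, hw] at hwin

theorem apply_sub_one_eq_of_reverse_agree (hw : Periodic w m) (hm : 1 ≤ m) (hmℓ : m ≤ ℓ)
    (f : β → β) (h : ∀ t : ℕ, t < ℓ → w (p' + t) = f (w (p + ℓ - 1 - t))) :
    w (p' - 1) = f (w (p + ℓ)) := by
  have hwin := h (m - 1) (by omega)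
  rwa [show p' + (m - 1 : ℕ) = p' - 1 + m by omega,
    show p + ℓ - 1 - (m - 1 : ℕ) = p + ℓ - m by omega, hw, hw.sub_eq] at hwin

end Function.Periodic

theorem band_auto_reaching_length_bound_general {α : Type*} (m : ℕ) (hm : 1 ≤ m)
    (w : ℤ → α × Bool) (hper : ∀ t : ℤ, w (t + m) = w t)
    (ℓ : ℕ) (p p' : ℤ)
    (htop₁ : (w (p - 1)).2 = true) (htop₂ : (w (p + ℓ)).2 = false)
    (hbot₁ : (w (p' - 1)).2 = false)
    (heq : (∀ t : ℕ, t < ℓ → w (p + t) = w (p' + t)) ∨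
           (∀ t : ℕ, t < ℓ →
             w (p' + t) = ((w (p + ℓ - 1 - t)).1, !(w (p + ℓ - 1 - t)).2))) :
    ℓ + 2 ≤ m := by
  by_contra! hlt
  obtain rfl | hmℓ : m = ℓ + 1 ∨ m ≤ ℓ := by omega
  · have hframe : w (p + ℓ) = w (p - 1) := by
      rw [← hper (p - 1)]
      congr 1
      push_cast
      ring
    simp [hframe, htop₁] at htop₂
  · rcases heq with hsame | hrev
    · have hleft := Function.Periodic.apply_sub_one_eq_of_shift_agree hper hm hmℓ hsame
      simp [hleft, hbot₁] at htop₁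
    · have hleft := Function.Periodic.apply_sub_one_eq_of_reverse_agree hper hm hmℓ
        (fun x => (x.1, !x.2)) hrev
      simp [hleft, htop₂] at hbot₁

theorem band_auto_reaching_length_bound {α : Type*} (m : ℕ) (hm : 1 ≤ m)
    (w : ℤ → α × Bool) (hper : ∀ t : ℤ, w (t + m) = w t)
    (ℓ : ℕ) (p p' : ℤ)
    (htop₁ : (w (p - 1)).2 = true) (htop₂ : (w (p + ℓ)).2 = false)
    (hbot₁ : (w (p' - 1)).2 = false) (hbot₂ : (w (p' + ℓ)).2 = true)
    (heq : (∀ t : ℕ, t < ℓ → w (p + t) = w (p' + t)) ∨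
           (∀ t : ℕ, t < ℓ →
             w (p' + t) = ((w (p + ℓ - 1 - t)).1, !(w (p + ℓ - 1 - t)).2))) :
    ℓ + 2 ≤ m :=
  band_auto_reaching_length_bound_general m hm w hper ℓ p p' htop₁ htop₂ hbot₁ heq
end
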